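/- Let N ≥ 1 and suppose the family of distributions P_{XY|AB} on pairs (x,y) ∈ {+1,−1}², indexed by settings a ∈ {0,2,…,2N−2} and b ∈ {1,3,…,2N−1}, is a local hidden variable model: there exist a finite set Λ, a probability distribution q on Λ, and families of probability distributions P₁(·|a,λ) and P₂(·|b,λ) on {+1,−1} such that P(x,y|a,b) = Σ_{λ∈Λ} q(λ)·P₁(x|a,λ)·P₂(y|b,λ) for all x, y, a, b. Then the chained-Bell quantity satisfies I_N ≥ 1. -/

import Mathlib

/-!
For a fixed hidden variable `λ` the two parties answer independently, so with
`r m = P(+1 | setting m, λ)` the probability of disagreeing at settings `m, m'` is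
`d(r m, r m') = r m (1 - r m') + (1 - r m) r m'`. On `[0, 1]` this satisfies the triangle
inequality, so along the chain `0, 1, …, 2N - 1` of neighbouring settings
`d(r 0, r (2N-1)) ≤ ∑ₘ d(r m, r (m+1))`, i.e. the `λ`-conditional value of `I_N` is at least
`1`. Averaging over `λ` gives `I_N ≥ 1`.
-/

noncomputable section

open Finset

/-- The two outcomes `+1` and `-1`. -/
def pm : Finset ℤ := {1, -1}

/-- Settings on side A: `{0, 2, 4, …, 2N-2}`. -/
def SA (N : ℕ) : Finset ℕ := (Finset.range N).image (fun k => 2 * k)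

/-- Settings on side B: `{1, 3, 5, …, 2N-1}`. -/
def SB (N : ℕ) : Finset ℕ := (Finset.range N).image (fun k => 2 * k + 1)

/-- Probability that `X = Y` given settings `(a, b)`. -/
def Pagree (P : ℕ → ℕ → ℤ → ℤ → ℝ) (a b : ℕ) : ℝ :=
  P a b 1 1 + P a b (-1) (-1)

/-- Probability that `X ≠ Y` given settings `(a, b)`. -/
def Pdiff (P : ℕ → ℕ → ℤ → ℤ → ℝ) (a b : ℕ) : ℝ :=
  P a b 1 (-1) + P a b (-1) 1

/-- Chained-Bell quantity `I_N` of the family `P_{XY|AB}`: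
`I_N = P(X=Y | A=0, B=2N-1) + ∑_{a,b : |a-b|=1} P(X≠Y | A=a, B=b)`. -/
def IN (P : ℕ → ℕ → ℤ → ℤ → ℝ) (N : ℕ) : ℝ :=
  Pagree P 0 (2 * N - 1) +
    ∑ p ∈ (SA N ×ˢ SB N).filter (fun p => p.1 + 1 = p.2 ∨ p.2 + 1 = p.1),
      Pdiff P p.1 p.2

def disagreeProb (u v : ℝ) : ℝ := u * (1 - v) + (1 - u) * v

lemma disagreeProb_comm (u v : ℝ) : disagreeProb u v = disagreeProb v u := by
  unfold disagreeProb; ring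

lemma disagreeProb_triangle {u v w : ℝ} (hu : u ∈ Set.Icc (0 : ℝ) 1) (hv : v ∈ Set.Icc (0 : ℝ) 1)
    (hw : w ∈ Set.Icc (0 : ℝ) 1) :
    disagreeProb u w ≤ disagreeProb u v + disagreeProb v w := by
  obtain ⟨hu0, hu1⟩ := hu
  obtain ⟨hv0, hv1⟩ := hv
  obtain ⟨hw0, hw1⟩ := hw
  -- the defect of the triangle inequality is `2 (v (1 - u) (1 - w) + (1 - v) u w)`
  unfold disagreeProb
  nlinarith [mul_nonneg (mul_nonneg hv0 (sub_nonneg.2 hu1)) (sub_nonneg.2 hw1),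
    mul_nonneg (mul_nonneg (sub_nonneg.2 hv1) hu0) hw0]

lemma disagreeProb_le_sum_range {r : ℕ → ℝ} {n : ℕ} (hn : 0 < n)
    (hr : ∀ m ≤ n, r m ∈ Set.Icc (0 : ℝ) 1) :
    disagreeProb (r 0) (r n) ≤ ∑ m ∈ range n, disagreeProb (r m) (r (m + 1)) := by
  induction n, hn using Nat.le_induction with
  | base => simp
  | succ n hn ih =>
    rw [sum_range_succ]
    have := disagreeProb_triangle (hr 0 (by omega)) (hr n (by omega)) (hr (n + 1) le_rfl)
    linarith [ih fun m hm => hr m (by omega)]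

lemma mem_SA {N a : ℕ} : a ∈ SA N ↔ a % 2 = 0 ∧ a < 2 * N := by
  simp only [SA, mem_image, mem_range]
  exact ⟨by rintro ⟨k, hk, rfl⟩; omega, fun h => ⟨a / 2, by omega, by omega⟩⟩

lemma mem_SB {N b : ℕ} : b ∈ SB N ↔ b % 2 = 1 ∧ b < 2 * N := by
  simp only [SB, mem_image, mem_range]
  exact ⟨by rintro ⟨k, hk, rfl⟩; omega, fun h => ⟨b / 2, by omega, by omega⟩⟩

/-- The link `{m, m + 1}` of the chain of settings as an (A-setting, B-setting) pair. -/
def chainEdge (m : ℕ) : ℕ × ℕ := if m % 2 = 0 then (m, m + 1) else (m + 1, m)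

lemma chainEdge_injective : Function.Injective chainEdge := by
  intro m m' h
  unfold chainEdge at h
  split_ifs at h <;> (rw [Prod.mk.injEq] at h; omega)

lemma filter_adjacent_eq_image_chainEdge (N : ℕ) :
    (SA N ×ˢ SB N).filter (fun p => p.1 + 1 = p.2 ∨ p.2 + 1 = p.1)
      = (range (2 * N - 1)).image chainEdge := by
  ext ⟨a, b⟩
  simp only [mem_filter, mem_product, mem_SA, mem_SB, mem_image, mem_range, chainEdge]
  constructor
  · rintro ⟨⟨ha, hb⟩, hab⟩
    refine ⟨min a b, by omega, ?_⟩
    split_ifs <;> (rw [Prod.mk.injEq]; omega)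
  · rintro ⟨m, hm, hedge⟩
    split_ifs at hedge <;> (rw [Prod.mk.injEq] at hedge; omega)

lemma IN_eq_Pagree_add_sum_chainEdge (P : ℕ → ℕ → ℤ → ℤ → ℝ) (N : ℕ) :
    IN P N = Pagree P 0 (2 * N - 1)
      + ∑ m ∈ range (2 * N - 1), Pdiff P (chainEdge m).1 (chainEdge m).2 := by
  rw [IN, filter_adjacent_eq_image_chainEdge,
    sum_image fun m _ m' _ h => chainEdge_injective h]

lemma apply_neg_one_eq_one_sub {f : ℤ → ℝ} (hf : ∑ x ∈ pm, f x = 1) : f (-1) = 1 - f 1 := by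
  rw [pm, sum_pair (by norm_num)] at hf
  linarith

lemma apply_one_mem_Icc {f : ℤ → ℝ} (hf0 : ∀ x ∈ pm, 0 ≤ f x) (hf : ∑ x ∈ pm, f x = 1) :
    f 1 ∈ Set.Icc (0 : ℝ) 1 := by
  have := hf0 (-1) (by simp [pm])
  exact ⟨hf0 1 (by simp [pm]), by linarith [apply_neg_one_eq_one_sub hf]⟩

section LocalModel

variable {Λ : Type*} [Fintype Λ] {q : Λ → ℝ} {f g : Λ → ℤ → ℝ} {P : ℕ → ℕ → ℤ → ℤ → ℝ} {a b : ℕ}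

lemma Pdiff_eq_sum_disagreeProb (hf : ∀ l, ∑ x ∈ pm, f l x = 1) (hg : ∀ l, ∑ y ∈ pm, g l y = 1)
    (hP : ∀ x ∈ pm, ∀ y ∈ pm, P a b x y = ∑ l, q l * f l x * g l y) :
    Pdiff P a b = ∑ l, q l * disagreeProb (f l 1) (g l 1) := by
  rw [Pdiff, hP 1 (by simp [pm]) (-1) (by simp [pm]), hP (-1) (by simp [pm]) 1 (by simp [pm]),
    ← sum_add_distrib]
  refine sum_congr rfl fun l _ => ?_
  rw [apply_neg_one_eq_one_sub (hf l), apply_neg_one_eq_one_sub (hg l), disagreeProb]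
  ring

lemma Pagree_eq_sum_one_sub_disagreeProb (hf : ∀ l, ∑ x ∈ pm, f l x = 1)
    (hg : ∀ l, ∑ y ∈ pm, g l y = 1)
    (hP : ∀ x ∈ pm, ∀ y ∈ pm, P a b x y = ∑ l, q l * f l x * g l y) :
    Pagree P a b = ∑ l, q l * (1 - disagreeProb (f l 1) (g l 1)) := by
  rw [Pagree, hP 1 (by simp [pm]) 1 (by simp [pm]), hP (-1) (by simp [pm]) (-1) (by simp [pm]),
    ← sum_add_distrib]
  refine sum_congr rfl fun l _ => ?_
  rw [apply_neg_one_eq_one_sub (hf l), apply_neg_one_eq_one_sub (hg l), disagreeProb]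
  ring

end LocalModel

lemma one_le_IN_of_disagreeProb {Λ : Type*} [Fintype Λ] {N : ℕ} (hN : 1 ≤ N)
    {P : ℕ → ℕ → ℤ → ℤ → ℝ} {q : Λ → ℝ} (hq : ∀ l, 0 ≤ q l) (hq1 : ∑ l, q l = 1)
    {r : Λ → ℕ → ℝ} (hr : ∀ l, ∀ m < 2 * N, r l m ∈ Set.Icc (0 : ℝ) 1)
    (hdiff : ∀ a ∈ SA N, ∀ b ∈ SB N, Pdiff P a b = ∑ l, q l * disagreeProb (r l a) (r l b))
    (hagree : Pagree P 0 (2 * N - 1) = ∑ l, q l * (1 - disagreeProb (r l 0) (r l (2 * N - 1)))) :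
    1 ≤ IN P N := by
  have hlink : ∀ m ∈ range (2 * N - 1), Pdiff P (chainEdge m).1 (chainEdge m).2
      = ∑ l, q l * disagreeProb (r l m) (r l (m + 1)) := by
    intro m hm
    rw [mem_range] at hm
    unfold chainEdge
    split_ifs with hm2
    · exact hdiff m (mem_SA.2 ⟨hm2, by omega⟩) (m + 1) (mem_SB.2 ⟨by omega, by omega⟩)
    · simp_rw [hdiff (m + 1) (mem_SA.2 ⟨by omega, by omega⟩) m (mem_SB.2 ⟨by omega, by omega⟩),
        disagreeProb_comm (r _ (m + 1))]
  rw [IN_eq_Pagree_add_sum_chainEdge, hagree, sum_congr rfl hlink, sum_comm, ← sum_add_distrib]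
  calc (1 : ℝ) = ∑ l, q l := hq1.symm
    _ ≤ _ := sum_le_sum fun l _ => by
      have := disagreeProb_le_sum_range (r := r l) (n := 2 * N - 1) (by omega)
        fun m hm => hr l m (by omega)
      rw [← mul_sum, ← mul_add]
      exact le_mul_of_one_le_right (hq l) (by linarith)

/-- `I_N ≥ 1` is a Bell inequality: it holds for any local hidden
variable model, i.e. any family of the form
`P(x,y|a,b) = ∑_λ q(λ) · P₁(x|a,λ) · P₂(y|b,λ)`. -/
theorem statement7 (N : ℕ) (hN : 1 ≤ N)
    (P : ℕ → ℕ → ℤ → ℤ → ℝ)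
    (Λ : Type) [Fintype Λ]
    (q : Λ → ℝ) (hq : ∀ l : Λ, 0 ≤ q l) (hq1 : ∑ l, q l = 1)
    (P₁ : ℤ → ℕ → Λ → ℝ)
    (hP₁pos : ∀ x ∈ pm, ∀ a ∈ SA N, ∀ l : Λ, 0 ≤ P₁ x a l)
    (hP₁sum : ∀ a ∈ SA N, ∀ l : Λ, ∑ x ∈ pm, P₁ x a l = 1)
    (P₂ : ℤ → ℕ → Λ → ℝ)
    (hP₂pos : ∀ y ∈ pm, ∀ b ∈ SB N, ∀ l : Λ, 0 ≤ P₂ y b l)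
    (hP₂sum : ∀ b ∈ SB N, ∀ l : Λ, ∑ y ∈ pm, P₂ y b l = 1)
    (hfac : ∀ a ∈ SA N, ∀ b ∈ SB N, ∀ x ∈ pm, ∀ y ∈ pm,
      P a b x y = ∑ l, q l * P₁ x a l * P₂ y b l) :
    1 ≤ IN P N := by
  set r : Λ → ℕ → ℝ := fun l m => if m % 2 = 0 then P₁ 1 m l else P₂ 1 m l
  have hrA : ∀ a ∈ SA N, ∀ l, r l a = P₁ 1 a l := fun a ha l => if_pos (mem_SA.1 ha).1
  have hrB : ∀ b ∈ SB N, ∀ l, r l b = P₂ 1 b l := fun b hb l => if_neg (by grind [mem_SB])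
  have hr : ∀ l, ∀ m < 2 * N, r l m ∈ Set.Icc (0 : ℝ) 1 := by
    intro l m hm
    rcases Nat.mod_two_eq_zero_or_one m with hm2 | hm2
    · have ha : m ∈ SA N := mem_SA.2 ⟨hm2, hm⟩
      rw [hrA m ha]
      exact apply_one_mem_Icc (fun x hx => hP₁pos x hx m ha l) (hP₁sum m ha l)
    · have hb : m ∈ SB N := mem_SB.2 ⟨hm2, hm⟩
      rw [hrB m hb]
      exact apply_one_mem_Icc (fun y hy => hP₂pos y hy m hb l) (hP₂sum m hb l)
  have h0 : 0 ∈ SA N := mem_SA.2 ⟨rfl, by omega⟩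
  have hlast : 2 * N - 1 ∈ SB N := mem_SB.2 ⟨by omega, by omega⟩
  refine one_le_IN_of_disagreeProb hN hq hq1 hr (fun a ha b hb => ?_) ?_
  · simp_rw [hrA a ha, hrB b hb]
    exact Pdiff_eq_sum_disagreeProb (hP₁sum a ha) (hP₂sum b hb) (hfac a ha b hb)
  · simp_rw [hrA 0 h0, hrB _ hlast]
    exact Pagree_eq_sum_one_sub_disagreeProb (hP₁sum 0 h0) (hP₂sum _ hlast) (hfac 0 h0 _ hlast)
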